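/- arXiv:2003.03079 — 2 statements merged into one kernel-verified Lean document; each statement's English description precedes it below -/
import Mathlib

section
/- If (v,u) ≈_k (x,y), then for every CPQ_k query q, (v,u) ∈ ⟦q⟧_G if and only if (x,y) ∈ ⟦q⟧_G. -/
/-- A step along an edge: `Sum.inl ℓ` traverses an edge labeled `ℓ` forwards,
`Sum.inr ℓ` traverses it backwards (the inverse label `ℓ⁻`). -/
def Matches {V L : Type*} (E : V → V → L → Prop) : List (L ⊕ L) → V → V → Prop
  | [], v, u => v = u
  | (Sum.inl ℓ) :: s, v, u => ∃ w, E v w ℓ ∧ Matches E s w u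
  | (Sum.inr ℓ) :: s, v, u => ∃ w, E w v ℓ ∧ Matches E s w u

/-- `(v,u) ∈ P^{≤k}`: `v` and `u` are connected by a path of length between 1 and `k`. -/
def Conn {V L : Type*} (E : V → V → L → Prop) (k : ℕ) (v u : V) : Prop :=
  ∃ s : List (L ⊕ L), s ≠ [] ∧ s.length ≤ k ∧ Matches E s v u

/-- `k`-path-bisimulation: `Bisim E k v u x y` means `(v,u) ≈_k (x,y)`. -/
def Bisim {V L : Type*} (E : V → V → L → Prop) : ℕ → V → V → V → V → Prop
  | 0, v, u, x, y => (v = u ↔ x = y)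
  | k + 1, v, u, x, y =>
    (v = u ↔ x = y) ∧
    (∀ ℓ, (E v u ℓ ↔ E x y ℓ) ∧ (E u v ℓ ↔ E y x ℓ)) ∧
    (1 ≤ k →
      (∀ m, Conn E k v m → Conn E k m u →
        ∃ m', Conn E k x m' ∧ Conn E k m' y ∧
          Bisim E k v m x m' ∧ Bisim E k m u m' y) ∧
      (∀ m, Conn E k x m → Conn E k m y →
        ∃ m', Conn E k v m' ∧ Conn E k m' u ∧
          Bisim E k x m v m' ∧ Bisim E k m y m' u))

/-- Syntax of conjunctive path queries. -/
inductive CPQ (L : Type*) where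
  | label : L → CPQ L
  | inv : L → CPQ L
  | id : CPQ L
  | comp : CPQ L → CPQ L → CPQ L
  | conj : CPQ L → CPQ L → CPQ L

/-- The diameter of a CPQ. -/
def CPQ.diam {L : Type*} : CPQ L → ℕ
  | .label _ => 1
  | .inv _ => 1
  | .id => 0
  | .comp a b => a.diam + b.diam
  | .conj a b => max a.diam b.diam

/-- Evaluation `⟦q⟧_G` of a CPQ on the graph with edge relation `E`. -/
def CPQ.eval {V L : Type*} (E : V → V → L → Prop) : CPQ L → V → V → Prop
  | .label ℓ, v, u => E v u ℓ
  | .inv ℓ, v, u => E u v ℓ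
  | .id, v, u => v = u
  | .comp a b, v, u => ∃ m, a.eval E v m ∧ b.eval E m u
  | .conj a b, v, u => a.eval E v u ∧ b.eval E v u

theorem matches_append {V L : Type*} (E : V → V → L → Prop) (s t : List (L ⊕ L)) (v u : V) :
    Matches E (s ++ t) v u ↔ ∃ w, Matches E s v w ∧ Matches E t w u := by
  induction s generalizing v with
  | nil => simp [Matches]
  | cons a s ih =>
    cases a with
    | inl ℓ =>
      simp only [List.cons_append, Matches]
      constructor
      · rintro ⟨w, hw, hm⟩
        obtain ⟨w', h1, h2⟩ := (ih w).1 hm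
        exact ⟨w', ⟨w, hw, h1⟩, h2⟩
      · rintro ⟨w', ⟨w, hw, h1⟩, h2⟩
        exact ⟨w, hw, (ih w).2 ⟨w', h1, h2⟩⟩
    | inr ℓ =>
      simp only [List.cons_append, Matches]
      constructor
      · rintro ⟨w, hw, hm⟩
        obtain ⟨w', h1, h2⟩ := (ih w).1 hm
        exact ⟨w', ⟨w, hw, h1⟩, h2⟩
      · rintro ⟨w', ⟨w, hw, h1⟩, h2⟩
        exact ⟨w, hw, (ih w).2 ⟨w', h1, h2⟩⟩

theorem conn_mono {V L : Type*} (E : V → V → L → Prop) {j k : ℕ} (h : j ≤ k)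
    {v u : V} : Conn E j v u → Conn E k v u := by
  rintro ⟨s, h1, h2, h3⟩; exact ⟨s, h1, h2.trans h, h3⟩

theorem conn_comp {V L : Type*} (E : V → V → L → Prop) {j j' : ℕ} {v m u : V}
    (h1 : Conn E j v m) (h2 : Conn E j' m u) : Conn E (j + j') v u := by
  obtain ⟨s, hs, hsl, hsm⟩ := h1
  obtain ⟨t, ht, htl, htm⟩ := h2
  refine ⟨s ++ t, by simp [hs], by simpa using Nat.add_le_add hsl htl, ?_⟩
  exact (matches_append E s t v u).2 ⟨m, hsm, htm⟩

theorem eval_diam_zero {V L : Type*} (E : V → V → L → Prop) (q : CPQ L)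
    (hq : q.diam = 0) (v u : V) : q.eval E v u ↔ v = u := by
  induction q generalizing v u with
  | label ℓ => simp [CPQ.diam] at hq
  | inv ℓ => simp [CPQ.diam] at hq
  | id => simp [CPQ.eval]
  | comp a b iha ihb =>
    simp only [CPQ.diam, Nat.add_eq_zero] at hq
    simp only [CPQ.eval, iha hq.1, ihb hq.2]
    constructor
    · rintro ⟨m, rfl, rfl⟩; rfl
    · rintro rfl; exact ⟨v, rfl, rfl⟩
  | conj a b iha ihb =>
    simp only [CPQ.diam, Nat.max_eq_zero_iff] at hq
    simp only [CPQ.eval, iha hq.1, ihb hq.2, and_self]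

theorem eval_conn {V L : Type*} (E : V → V → L → Prop) (q : CPQ L) :
    ∀ v u, 1 ≤ q.diam → q.eval E v u → Conn E q.diam v u := by
  induction q with
  | label ℓ =>
    intro v u _ h
    exact ⟨[Sum.inl ℓ], by simp, by simp [CPQ.diam], ⟨u, h, by simp [Matches]⟩⟩
  | inv ℓ =>
    intro v u _ h
    exact ⟨[Sum.inr ℓ], by simp, by simp [CPQ.diam], ⟨u, h, by simp [Matches]⟩⟩
  | id => intro v u hd; simp [CPQ.diam] at hd
  | comp a b iha ihb =>
    intro v u hd hev
    obtain ⟨m, ha, hb⟩ := hev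
    have hdc : (CPQ.comp a b).diam = a.diam + b.diam := rfl
    rcases Nat.eq_zero_or_pos a.diam with h0 | h1
    · have : v = m := (eval_diam_zero E a h0 v m).1 ha
      subst this
      have hb1 : 1 ≤ b.diam := by rw [hdc] at hd; omega
      exact conn_mono E (by rw [hdc]; omega) (ihb v u hb1 hb)
    · rcases Nat.eq_zero_or_pos b.diam with h0' | h1'
      · obtain rfl := ((eval_diam_zero E b h0' m u).1 hb).symm
        exact conn_mono E (by rw [hdc]; omega) (iha v u h1 ha)
      · rw [hdc]
        exact conn_comp E (iha v m h1 ha) (ihb m u h1' hb)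
  | conj a b iha ihb =>
    intro v u hd hev
    have hdc : (CPQ.conj a b).diam = max a.diam b.diam := rfl
    rcases Nat.eq_zero_or_pos a.diam with h0 | h1
    · have hb1 : 1 ≤ b.diam := by rw [hdc] at hd; omega
      exact conn_mono E (by rw [hdc]; omega) (ihb v u hb1 hev.2)
    · exact conn_mono E (by rw [hdc]; omega) (iha v u h1 hev.1)

theorem bisim_eq {V L : Type*} (E : V → V → L → Prop) {k : ℕ} {v u x y : V}
    (h : Bisim E k v u x y) : (v = u ↔ x = y) := by
  cases k with
  | zero => exact h
  | succ k => exact h.1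

theorem bisim_cpq_aux {V L : Type*} (E : V → V → L → Prop) (q : CPQ L) :
    ∀ k v u x y, Bisim E k v u x y → q.diam ≤ k → (q.eval E v u ↔ q.eval E x y) := by
  induction q with
  | label ℓ =>
    intro k v u x y h hd
    have hk : 1 ≤ k := le_trans (by simp [CPQ.diam]) hd
    obtain ⟨k', rfl⟩ : ∃ k', k = k' + 1 := ⟨k - 1, by omega⟩
    exact (h.2.1 ℓ).1
  | inv ℓ =>
    intro k v u x y h hd
    have hk : 1 ≤ k := le_trans (by simp [CPQ.diam]) hd
    obtain ⟨k', rfl⟩ : ∃ k', k = k' + 1 := ⟨k - 1, by omega⟩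
    exact (h.2.1 ℓ).2
  | id =>
    intro k v u x y h hd
    simp only [CPQ.eval]
    exact bisim_eq E h
  | comp a b iha ihb =>
    intro k v u x y h hd
    simp only [CPQ.eval]
    have hd' : a.diam + b.diam ≤ k := hd
    rcases Nat.eq_zero_or_pos a.diam with h0 | h1
    · constructor
      · rintro ⟨m, ha, hb⟩
        have : v = m := (eval_diam_zero E a h0 v m).1 ha
        subst this
        exact ⟨x, (eval_diam_zero E a h0 x x).2 rfl, (ihb k v u x y h (by omega)).1 hb⟩
      · rintro ⟨m, ha, hb⟩
        have : x = m := (eval_diam_zero E a h0 x m).1 ha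
        subst this
        exact ⟨v, (eval_diam_zero E a h0 v v).2 rfl, (ihb k v u x y h (by omega)).2 hb⟩
    · rcases Nat.eq_zero_or_pos b.diam with h0' | h1'
      · constructor
        · rintro ⟨m, ha, hb⟩
          obtain rfl := ((eval_diam_zero E b h0' m u).1 hb).symm
          exact ⟨y, (iha k v u x y h (by omega)).1 ha, (eval_diam_zero E b h0' y y).2 rfl⟩
        · rintro ⟨m, ha, hb⟩
          obtain rfl := ((eval_diam_zero E b h0' m y).1 hb).symm
          exact ⟨u, (iha k v u x y h (by omega)).2 ha, (eval_diam_zero E b h0' u u).2 rfl⟩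
      · obtain ⟨k', rfl⟩ : ∃ k', k = k' + 1 := ⟨k - 1, by omega⟩
        have hk1 : 1 ≤ k' := by omega
        obtain ⟨hfwd, hbwd⟩ := h.2.2 hk1
        constructor
        · rintro ⟨m, ha, hb⟩
          have cva : Conn E k' v m := conn_mono E (by omega) (eval_conn E a v m h1 ha)
          have cmb : Conn E k' m u := conn_mono E (by omega) (eval_conn E b m u h1' hb)
          obtain ⟨m', _, _, hb1, hb2⟩ := hfwd m cva cmb
          exact ⟨m', (iha k' v m x m' hb1 (by omega)).1 ha,
            (ihb k' m u m' y hb2 (by omega)).1 hb⟩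
        · rintro ⟨m, ha, hb⟩
          have cva : Conn E k' x m := conn_mono E (by omega) (eval_conn E a x m h1 ha)
          have cmb : Conn E k' m y := conn_mono E (by omega) (eval_conn E b m y h1' hb)
          obtain ⟨m', _, _, hb1, hb2⟩ := hbwd m cva cmb
          exact ⟨m', (iha k' x m v m' hb1 (by omega)).1 ha,
            (ihb k' m y m' u hb2 (by omega)).1 hb⟩
  | conj a b iha ihb =>
    intro k v u x y h hd
    have hd' : max a.diam b.diam ≤ k := hd
    simp only [CPQ.eval]
    exact and_congr (iha k v u x y h (by omega)) (ihb k v u x y h (by omega))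

/-- k-path-bisimilar pairs are indistinguishable by CPQ_k queries. -/
theorem bisim_cpq_invariance {V L : Type*} (E : V → V → L → Prop) (k : ℕ)
    (v u x y : V) (h : Bisim E k v u x y) :
    ∀ q : CPQ L, q.diam ≤ k → (q.eval E v u ↔ q.eval E x y) :=
  fun q hq => bisim_cpq_aux E q k v u x y h hq
end

section
/- If (v,u) ≈_k (x,y), then L^{≤k}(v,u) = L^{≤k}(x,y), i.e. every label sequence of length at most k realized between (v,u) is also realized between (x,y) and vice versa. -/
lemma bisim_symm {V L : Type*} (E : V → V → L → Prop) :
    ∀ k v u x y, Bisim E k v u x y → Bisim E k x y v u := by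
  intro k v u x y h
  cases k with
  | zero => exact h.symm
  | succ k =>
    exact ⟨h.1.symm, fun ℓ => ⟨(h.2.1 ℓ).1.symm, (h.2.1 ℓ).2.symm⟩,
      fun hk => ⟨(h.2.2 hk).2, (h.2.2 hk).1⟩⟩

lemma matches_of_bisim {V L : Type*} (E : V → V → L → Prop) :
    ∀ k v u x y, Bisim E k v u x y → ∀ s : List (L ⊕ L),
      1 ≤ s.length → s.length ≤ k → Matches E s v u → Matches E s x y := by
  intro k
  induction k with
  | zero => intro v u x y _ s h1 h2 _; omega
  | succ k ih =>
    intro v u x y h s h1 h2 hm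
    match s with
    | [Sum.inl ℓ] =>
      obtain ⟨w, hw, he⟩ := hm
      simp only [Matches] at he
      subst he
      exact ⟨y, ((h.2.1 ℓ).1).mp hw, rfl⟩
    | [Sum.inr ℓ] =>
      obtain ⟨w, hw, he⟩ := hm
      simp only [Matches] at he
      subst he
      exact ⟨y, ((h.2.1 ℓ).2).mp hw, rfl⟩
    | a :: b :: s2 =>
      have hk : 1 ≤ k := by
        simp only [List.length_cons] at h2; omega
      have hlen2 : (b :: s2).length ≤ k := by
        simp only [List.length_cons] at h2 ⊢; omega
      cases a with
      | inl ℓ =>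
        obtain ⟨m, hvm, hmu⟩ := hm
        have cvm : Conn E k v m :=
          ⟨[Sum.inl ℓ], by simp, by simpa using hk, ⟨m, hvm, rfl⟩⟩
        have cmu : Conn E k m u := ⟨b :: s2, by simp, hlen2, hmu⟩
        obtain ⟨m', _, _, hb1, hb2⟩ := (h.2.2 hk).1 m cvm cmu
        have h1' : Matches E [Sum.inl ℓ] x m' :=
          ih v m x m' hb1 [Sum.inl ℓ] (by simp) (by simpa using hk) ⟨m, hvm, rfl⟩
        obtain ⟨w, hxw, hw⟩ := h1'
        simp only [Matches] at hw
        subst hw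
        exact ⟨w, hxw, ih m u w y hb2 (b :: s2) (by simp) hlen2 hmu⟩
      | inr ℓ =>
        obtain ⟨m, hvm, hmu⟩ := hm
        have cvm : Conn E k v m :=
          ⟨[Sum.inr ℓ], by simp, by simpa using hk, ⟨m, hvm, rfl⟩⟩
        have cmu : Conn E k m u := ⟨b :: s2, by simp, hlen2, hmu⟩
        obtain ⟨m', _, _, hb1, hb2⟩ := (h.2.2 hk).1 m cvm cmu
        have h1' : Matches E [Sum.inr ℓ] x m' :=
          ih v m x m' hb1 [Sum.inr ℓ] (by simp) (by simpa using hk) ⟨m, hvm, rfl⟩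
        obtain ⟨w, hxw, hw⟩ := h1'
        simp only [Matches] at hw
        subst hw
        exact ⟨w, hxw, ih m u w y hb2 (b :: s2) (by simp) hlen2 hmu⟩

/-- ≈_k implies equality of the realized label-sequence sets L^{≤k}. -/
theorem bisim_implies_label_seq_eq {V L : Type*} (E : V → V → L → Prop) (k : ℕ)
    (v u x y : V) (h : Bisim E k v u x y) :
    {s : List (L ⊕ L) | 1 ≤ s.length ∧ s.length ≤ k ∧ Matches E s v u} =
    {s : List (L ⊕ L) | 1 ≤ s.length ∧ s.length ≤ k ∧ Matches E s x y} := by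
  ext s
  simp only [Set.mem_setOf_eq]
  constructor
  · rintro ⟨h1, h2, hm⟩
    exact ⟨h1, h2, matches_of_bisim E k v u x y h s h1 h2 hm⟩
  · rintro ⟨h1, h2, hm⟩
    exact ⟨h1, h2, matches_of_bisim E k x y v u (bisim_symm E k v u x y h) s h1 h2 hm⟩
end
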